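/- Let F ∈ Fields_1 and m ≥ 3. The ℚ-linear map B_2(F(t))⊗Λ^{m−2} F(t)^× → ⊕_p B_2(F(p))⊗Λ^{m−3} F(p)^×, where the direct sum is over all monic irreducible polynomials p ∈ F[t] and the p-th component is the tame symbol ∂_{ν_p}, is surjective. -/

import Mathlib

open scoped TensorProduct
open ExteriorAlgebra

noncomputable section ChowPrelim

universe u

/-- The ℚ-vector space `F^× ⊗ ℚ` attached to a field `F`. -/
abbrev UnitsQ (F : Type u) [Field F] : Type u := ℚ ⊗[ℤ] (Additive Fˣ)

/-- The canonical map `F → F^× ⊗ ℚ`, sending a nonzero `x` to `x ⊗ 1` and `0` to `0`. -/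
noncomputable def mkQ {F : Type u} [Field F] (x : F) : UnitsQ F :=
  letI := Classical.dec (x = 0)
  if h : x = 0 then 0 else (1 : ℚ) ⊗ₜ[ℤ] (Additive.ofMul (Units.mk0 x h))

/-- The wedge `x₁ ∧ ⋯ ∧ xₙ ∈ Λ^n (F^× ⊗ ℚ)` of a family of elements of `F`. -/
noncomputable def wedgeF {F : Type u} [Field F] (n : ℕ) (x : Fin n → F) :
    ⋀[ℚ]^n (UnitsQ F) :=
  ⟨ExteriorAlgebra.ιMulti ℚ n (fun i => mkQ (x i)),
    ExteriorAlgebra.ιMulti_range ℚ n ⟨_, rfl⟩⟩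

/-- Wedge of an abstract family of vectors. -/
noncomputable def wedgeV {M : Type u} [AddCommGroup M] [Module ℚ M] (n : ℕ) (v : Fin n → M) :
    ⋀[ℚ]^n M :=
  ⟨ExteriorAlgebra.ιMulti ℚ n v, ExteriorAlgebra.ιMulti_range ℚ n ⟨_, rfl⟩⟩

/-- The product `a ∧ v₁ ∧ ⋯ ∧ v_q : Λ^r M` of an element `a ∈ Λ^p M` with `q` further vectors,
where `p + q = r`. -/
noncomputable def wedgeMulC {M : Type u} [AddCommGroup M] [Module ℚ M] (p q r : ℕ)
    (h : p + q = r) (a : ⋀[ℚ]^p M) (v : Fin q → M) : ⋀[ℚ]^r M :=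
  ⟨a.1 * (ExteriorAlgebra.ιMulti ℚ q v : ExteriorAlgebra ℚ M), by
    subst h
    have hmem : (ExteriorAlgebra.ιMulti ℚ q v : ExteriorAlgebra ℚ M) ∈
        (LinearMap.range (ι ℚ : M →ₗ[ℚ] ExteriorAlgebra ℚ M)) ^ q :=
      ExteriorAlgebra.ιMulti_range ℚ q ⟨_, rfl⟩
    have h2 := Submodule.mul_mem_mul a.2 hmem
    rw [← pow_add] at h2
    exact h2⟩

/-- The functorial map `Λ^n M → Λ^n N` induced by a linear map. -/
noncomputable def powMap {M N : Type u} [AddCommGroup M] [Module ℚ M]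
    [AddCommGroup N] [Module ℚ N] (n : ℕ) (f : M →ₗ[ℚ] N) :
    ⋀[ℚ]^n M →ₗ[ℚ] ⋀[ℚ]^n N :=
  (ExteriorAlgebra.map f).toLinearMap.restrict (p := ⋀[ℚ]^n M) (q := ⋀[ℚ]^n N)
    (by
      intro x hx
      have h : Submodule.map (ExteriorAlgebra.map f).toLinearMap (⋀[ℚ]^n M) ≤ ⋀[ℚ]^n N := by
        rw [← ExteriorAlgebra.ιMulti_span_fixedDegree, ← ExteriorAlgebra.ιMulti_span_fixedDegree,
          Submodule.map_span]
        refine Submodule.span_le.2 ?_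
        rintro _ ⟨_, ⟨v, rfl⟩, rfl⟩
        exact Submodule.subset_span ⟨f ∘ v, (ExteriorAlgebra.map_apply_ιMulti f v).symm⟩
      exact h ⟨x, hx, rfl⟩)

/-- The linear map `F^× ⊗ ℚ → K^× ⊗ ℚ` induced by a field embedding. -/
noncomputable def unitsQMap {F K : Type u} [Field F] [Field K] (j : F →+* K) :
    UnitsQ F →ₗ[ℚ] UnitsQ K :=
  LinearMap.baseChange ℚ
    ((MonoidHom.toAdditive (Units.map (j : F →* K))).toIntLinearMap)

section PreBloch

variable (F : Type u) [Field F]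

/-- Auxiliary "difference" of two points of `P^1(F) = Option F` (`none` is `∞`),
used to define the cross-ratio. -/
def pdiff : Option F → Option F → F
  | some a, some b => a - b
  | _, _ => 1

/-- The cross-ratio of four points of `P^1(F)`, as an element of `F`
(it lies in `F ∖ {0,1}` when the four points are distinct). -/
def crossRatio (x1 x2 x3 x4 : Option F) : F :=
  (pdiff F x1 x3 * pdiff F x2 x4) / (pdiff F x1 x4 * pdiff F x2 x3)

/-- The subspace of relations defining the pre-Bloch group: `{0}₂, {1}₂, {∞}₂` and the
five-term cross-ratio relations for five distinct points of `P^1(F)`. -/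
def B2Rel : Submodule ℚ (Option F →₀ ℚ) :=
  Submodule.span ℚ
    ({Finsupp.single (some 0) 1, Finsupp.single (some 1) 1, Finsupp.single none 1} ∪
      {r | ∃ x : Fin 5 → Option F, Function.Injective x ∧
        r = ∑ i : Fin 5, ((-1 : ℚ) ^ (i : ℕ)) •
          Finsupp.single (some (crossRatio F (x (i.succAbove 0)) (x (i.succAbove 1))
            (x (i.succAbove 2)) (x (i.succAbove 3)))) (1 : ℚ)})

/-- The pre-Bloch group `B₂(F)` (with ℚ-coefficients). -/
abbrev B2 : Type u := (Option F →₀ ℚ) ⧸ B2Rel F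

/-- The generator `{x}₂` of the pre-Bloch group. -/
def B2.gen {F : Type u} [Field F] (x : F) : B2 F :=
  Submodule.Quotient.mk (Finsupp.single (some x) 1)

end PreBloch

section Deltas

variable (F : Type u) [Field F]

/-- `d` is the differential `δ₂ : B₂(F) → Λ² F^×`, `{x}₂ ↦ x ∧ (1-x)`. -/
def IsDelta2 (d : B2 F →ₗ[ℚ] ⋀[ℚ]^2 (UnitsQ F)) : Prop :=
  ∀ x : F, x ≠ 0 → x ≠ 1 → d (B2.gen x) = wedgeF 2 ![x, 1 - x]

/-- `d` is the differential `δ₃ : B₂(F) ⊗ F^× → Λ³ F^×`, `{x}₂ ⊗ y ↦ x ∧ (1-x) ∧ y`. -/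
def IsDelta3 (d : B2 F ⊗[ℚ] UnitsQ F →ₗ[ℚ] ⋀[ℚ]^3 (UnitsQ F)) : Prop :=
  ∀ x y : F, x ≠ 0 → x ≠ 1 → y ≠ 0 →
    d (B2.gen x ⊗ₜ mkQ y) = wedgeF 3 ![x, 1 - x, y]

/-- `d` is the differential `δ₄ : B₂(F) ⊗ Λ² F^× → Λ⁴ F^×`,
`{x}₂ ⊗ (y ∧ z) ↦ x ∧ (1-x) ∧ y ∧ z`. -/
def IsDelta4 (d : B2 F ⊗[ℚ] (⋀[ℚ]^2 (UnitsQ F)) →ₗ[ℚ] ⋀[ℚ]^4 (UnitsQ F)) : Prop :=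
  ∀ x y z : F, x ≠ 0 → x ≠ 1 → y ≠ 0 → z ≠ 0 →
    d (B2.gen x ⊗ₜ wedgeF 2 ![y, z]) = wedgeF 4 ![x, 1 - x, y, z]

end Deltas

section Valuations

variable {F K : Type u} [Field F] [Field K]

/-- `ν` is (the additive form of) a discrete valuation on `F`:
a surjection onto `ℤ` defined on `F ∖ {0}`, multiplicative, and
satisfying the ultrametric inequality. -/
structure IsDVal (ν : F → ℤ) : Prop where
  map_mul : ∀ x y : F, x ≠ 0 → y ≠ 0 → ν (x * y) = ν x + ν y
  map_add : ∀ x y : F, x ≠ 0 → y ≠ 0 → x + y ≠ 0 → min (ν x) (ν y) ≤ ν (x + y)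
  surj : ∀ n : ℤ, ∃ x : F, x ≠ 0 ∧ ν x = n

/-- `res : F → K` realizes `K` as the residue field of the discrete valuation `ν`:
it is a surjective ring homomorphism on the valuation ring `O_ν` with kernel the
maximal ideal `m_ν` (and arbitrary elsewhere). -/
structure IsResidue (ν : F → ℤ) (res : F → K) : Prop where
  map_one : res 1 = 1
  map_add : ∀ x y : F, (x = 0 ∨ 0 ≤ ν x) → (y = 0 ∨ 0 ≤ ν y) →
    res (x + y) = res x + res y
  map_mul : ∀ x y : F, (x = 0 ∨ 0 ≤ ν x) → (y = 0 ∨ 0 ≤ ν y) →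
    res (x * y) = res x * res y
  zero_iff : ∀ x : F, (x = 0 ∨ 0 ≤ ν x) → (res x = 0 ↔ (x = 0 ∨ 0 < ν x))
  surj : ∀ z : K, ∃ x : F, (x = 0 ∨ 0 ≤ ν x) ∧ res x = z

/-- `D` is the tame symbol `∂_ν^{(n+1)} : Λ^{n+1} F^× → Λ^n K^×` attached to the discrete
valuation `ν` with residue field `K` (via `res`): it is characterized by
`∂(π ∧ u₂ ∧ ⋯ ∧ u_{n+1}) = ū₂ ∧ ⋯ ∧ ū_{n+1}` for a uniformizer `π` and units `uᵢ`. -/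
def IsTame (ν : F → ℤ) (res : F → K) (n : ℕ)
    (D : ⋀[ℚ]^(n + 1) (UnitsQ F) →ₗ[ℚ] ⋀[ℚ]^n (UnitsQ K)) : Prop :=
  ∀ (π : F) (u : Fin n → F), π ≠ 0 → ν π = 1 → (∀ i, u i ≠ 0 ∧ ν (u i) = 0) →
    D (wedgeF (n + 1) (Fin.cons π u)) = wedgeF n (fun i => res (u i))

/-- `D` is the tame symbol `∂_ν^{(2)} : Λ² F^× → K^×`, with target the residue field itself. -/
def IsTame2U (ν : F → ℤ) (res : F → K) (D : ⋀[ℚ]^2 (UnitsQ F) →ₗ[ℚ] UnitsQ K) : Prop :=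
  ∀ π u : F, π ≠ 0 → ν π = 1 → u ≠ 0 → ν u = 0 → D (wedgeF 2 ![π, u]) = mkQ (res u)

/-- `D` is the tame symbol `∂_ν : B₂(F) ⊗ F^× → B₂(K)`. -/
def IsTameB1 (ν : F → ℤ) (res : F → K)
    (D : B2 F ⊗[ℚ] UnitsQ F →ₗ[ℚ] B2 K) : Prop :=
  (∀ a b : F, a ≠ 0 → a ≠ 1 → ν a ≠ 0 → b ≠ 0 → D (B2.gen a ⊗ₜ mkQ b) = 0) ∧
  (∀ u b : F, u ≠ 0 → ν u = 0 → b ≠ 0 →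
    D (B2.gen u ⊗ₜ mkQ b) = -((ν b : ℚ) • B2.gen (res u)))

/-- `D` is the tame symbol `∂_ν : B₂(F) ⊗ Λ² F^× → B₂(K) ⊗ K^×`, where `D2` is the tame
symbol `∂_ν^{(2)}`. -/
def IsTameB2 (ν : F → ℤ) (res : F → K) (D2 : ⋀[ℚ]^2 (UnitsQ F) →ₗ[ℚ] UnitsQ K)
    (D : B2 F ⊗[ℚ] (⋀[ℚ]^2 (UnitsQ F)) →ₗ[ℚ] B2 K ⊗[ℚ] UnitsQ K) : Prop :=
  (∀ (a : F) (b : ⋀[ℚ]^2 (UnitsQ F)), a ≠ 0 → a ≠ 1 → ν a ≠ 0 → D (B2.gen a ⊗ₜ b) = 0) ∧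
  (∀ (u : F) (b : ⋀[ℚ]^2 (UnitsQ F)), u ≠ 0 → ν u = 0 →
    D (B2.gen u ⊗ₜ b) = -(B2.gen (res u) ⊗ₜ D2 b))

/-- `D` is the tame symbol `∂_ν : B₂(F) ⊗ Λ^{n+1} F^× → B₂(K) ⊗ Λ^n K^×`, where `Dn` is
the tame symbol `∂_ν^{(n+1)}`. -/
def IsTameBGen (ν : F → ℤ) (res : F → K) (n : ℕ)
    (Dn : ⋀[ℚ]^(n + 1) (UnitsQ F) →ₗ[ℚ] ⋀[ℚ]^n (UnitsQ K))
    (D : B2 F ⊗[ℚ] (⋀[ℚ]^(n + 1) (UnitsQ F)) →ₗ[ℚ] B2 K ⊗[ℚ] (⋀[ℚ]^n (UnitsQ K))) : Prop :=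
  (∀ (a : F) (b : ⋀[ℚ]^(n + 1) (UnitsQ F)), a ≠ 0 → a ≠ 1 → ν a ≠ 0 →
    D (B2.gen a ⊗ₜ b) = 0) ∧
  (∀ (u : F) (b : ⋀[ℚ]^(n + 1) (UnitsQ F)), u ≠ 0 → ν u = 0 →
    D (B2.gen u ⊗ₜ b) = -(B2.gen (res u) ⊗ₜ Dn b))

end Valuations

section Fields

variable (k F : Type u) [Field k] [Field F] [Algebra k F]

/-- `F` is a finitely generated extension of `k` of transcendence degree `1`. -/
def IsFields1 : Prop :=
  (∃ s : Finset F, IntermediateField.adjoin k (s : Set F) = ⊤) ∧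
  ∃ x : F, Transcendental k x ∧
    Algebra.IsAlgebraic (IntermediateField.adjoin k {x}) F

/-- `F` is a finitely generated extension of `k` of transcendence degree `2`. -/
def IsFields2 : Prop :=
  (∃ s : Finset F, IntermediateField.adjoin k (s : Set F) = ⊤) ∧
  ∃ x y : F, AlgebraicIndependent k ![x, y] ∧
    Algebra.IsAlgebraic (IntermediateField.adjoin k {x, y}) F

/-- `res : F → k` is the canonical residue map of `ν` onto `k`
(restricting to the identity on `k`). -/
def GoodResK (ν : F → ℤ) (res : F → k) : Prop :=
  IsResidue ν res ∧ ∀ c : k, res (algebraMap k F c) = c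

/-- The set `val(F)` of discrete valuations of `F` trivial on `k` with residue field `k`. -/
def ValInd : Type u :=
  {ν : F → ℤ // IsDVal ν ∧ (∀ c : k, c ≠ 0 → ν (algebraMap k F c) = 0) ∧
    ∃ res : F → k, GoodResK k F ν res}

/-- `h : Λ³ F^× → B₂(k)` is a lifted reciprocity map on `F ∈ Fields₁`:
(1) `-δ₂(h a) = Σ_{ν ∈ val(F)} ∂_ν^{(3)} a`;
(2) `h (δ₃ c) = Σ_{ν ∈ val(F)} ∂_ν c`;
(3) `h` vanishes on the image of `Λ² F^× ⊗ k^× → Λ³ F^×`. -/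
def IsLiftedRec (h : ⋀[ℚ]^3 (UnitsQ F) →ₗ[ℚ] B2 k) : Prop :=
  (∀ d2 : B2 k →ₗ[ℚ] ⋀[ℚ]^2 (UnitsQ k), IsDelta2 k d2 →
    ∀ res : ∀ _ : ValInd k F, F → k, (∀ v : ValInd k F, GoodResK k F v.1 (res v)) →
    ∀ D : ∀ _ : ValInd k F, ⋀[ℚ]^3 (UnitsQ F) →ₗ[ℚ] ⋀[ℚ]^2 (UnitsQ k),
      (∀ v : ValInd k F, IsTame v.1 (res v) 2 (D v)) →
    ∀ a : ⋀[ℚ]^3 (UnitsQ F), -(d2 (h a)) = ∑ᶠ v : ValInd k F, D v a) ∧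
  (∀ d3 : B2 F ⊗[ℚ] UnitsQ F →ₗ[ℚ] ⋀[ℚ]^3 (UnitsQ F), IsDelta3 F d3 →
    ∀ res : ∀ _ : ValInd k F, F → k, (∀ v : ValInd k F, GoodResK k F v.1 (res v)) →
    ∀ DB : ∀ _ : ValInd k F, B2 F ⊗[ℚ] UnitsQ F →ₗ[ℚ] B2 k,
      (∀ v : ValInd k F, IsTameB1 v.1 (res v) (DB v)) →
    ∀ c : B2 F ⊗[ℚ] UnitsQ F, h (d3 c) = ∑ᶠ v : ValInd k F, DB v c) ∧
  (∀ (y z : F) (c : k), y ≠ 0 → z ≠ 0 → c ≠ 0 →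
    h (wedgeF 3 ![y, z, algebraMap k F c]) = 0)

end Fields

/-- The degree `[K : j(F)]` of a field embedding. -/
noncomputable def fieldDeg {F K : Type u} [Field F] [Field K] (j : F →+* K) : ℕ :=
  letI : Algebra F K := j.toAlgebra
  Module.finrank F K

/-- The pullback `j^* h = (1/[F₂ : j(F₁)]) · h ∘ j_*` of a lifted reciprocity map. -/
noncomputable def pullRec (k F₁ F₂ : Type u) [Field k] [Field F₁] [Field F₂]
    (j : F₁ →+* F₂) (h : ⋀[ℚ]^3 (UnitsQ F₂) →ₗ[ℚ] B2 k) :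
    ⋀[ℚ]^3 (UnitsQ F₁) →ₗ[ℚ] B2 k :=
  ((fieldDeg j : ℚ))⁻¹ • (h ∘ₗ powMap 3 (unitsQMap j))

end ChowPrelim

noncomputable section ChowPrelim2

universe u

open scoped TensorProduct

/-- The monic irreducible polynomials over `F`, indexing the closed points of `𝔸¹_F`,
i.e. the general discrete valuations of `F(t)`. -/
def MonicIrr (F : Type u) [Field F] : Type u :=
  {p : Polynomial F // p.Monic ∧ Irreducible p}

/-- The residue field `F(p) = F[t]/(p)` of the valuation attached to a monic irreducible
polynomial `p`. -/
def ResField {F : Type u} [Field F] (p : MonicIrr F) : Type u := AdjoinRoot p.1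

noncomputable instance ResField.instField {F : Type u} [Field F] (p : MonicIrr F) :
    Field (ResField p) :=
  letI : Fact (Irreducible p.1) := ⟨p.2.2⟩
  inferInstanceAs (Field (AdjoinRoot p.1))

/-- `ν` is the discrete valuation of `F(t)` attached to the monic irreducible polynomial `p`. -/
def IsNuP {F : Type u} [Field F] (p : MonicIrr F) (ν : RatFunc F → ℤ) : Prop :=
  IsDVal ν ∧ ν (algebraMap (Polynomial F) (RatFunc F) p.1) = 1 ∧
    ∀ g : Polynomial F, g ≠ 0 → ¬(p.1 ∣ g) →
      ν (algebraMap (Polynomial F) (RatFunc F) g) = 0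

/-- `res` is the canonical residue map `F(t) → F(p)` of the valuation attached to `p`. -/
def IsResP {F : Type u} [Field F] (p : MonicIrr F) (ν : RatFunc F → ℤ)
    (res : RatFunc F → ResField p) : Prop :=
  IsResidue ν res ∧ ∀ g : Polynomial F,
    res (algebraMap (Polynomial F) (RatFunc F) g) =
      (AdjoinRoot.mk p.1 g : AdjoinRoot p.1)

/-- Bundled realization of the residue field of a discrete valuation `ν` on `L`
(trivial on `k`): a field `R` with a `k`-algebra structure together with the residue map. -/
structure ResData (k L : Type u) [Field k] [Field L] [Algebra k L] (ν : L → ℤ) :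
    Type (u + 1) where
  R : Type u
  [fieldR : Field R]
  [algR : Algebra k R]
  res : L → R
  isRes : IsResidue ν res
  compat : ∀ c : k, res (algebraMap k L c) = algebraMap k R c

attribute [instance] ResData.fieldR ResData.algR

/-- The set `dval(L)` of divisorial valuations of `L ∈ Fields₂`: discrete valuations trivial
on `k` whose residue field is a finitely generated extension of `k` of transcendence
degree `1`. -/
def DValInd (k L : Type u) [Field k] [Field L] [Algebra k L] : Type u :=
  {ν : L → ℤ // IsDVal ν ∧ (∀ c : k, c ≠ 0 → ν (algebraMap k L c) = 0) ∧
    ∃ rd : ResData k L ν, IsFields1 k rd.R}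

/-- A height-one prime ideal (in a domain). -/
def IsHeightOne {R : Type u} [CommRing R] (p : Ideal R) : Prop :=
  p.IsPrime ∧ p ≠ ⊥ ∧ ∀ q : Ideal R, q.IsPrime → q < p → q = ⊥

/-- `R/p` is regular, i.e. (for a one-dimensional local ring) the maximal ideal of `R/p`
is principal. -/
def QuotRegular {R : Type u} [CommRing R] [IsLocalRing R] (p : Ideal R) : Prop :=
  ∃ t : R, Ideal.map (Ideal.Quotient.mk p) (IsLocalRing.maximalIdeal R) =
    Ideal.span {Ideal.Quotient.mk p t}

/-- The height-one primes `p` of `R` with `R/p` regular. -/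
def RegPrimes (R : Type u) [CommRing R] [IsLocalRing R] : Type u :=
  {p : Ideal R // IsHeightOne p ∧ QuotRegular p}

instance RegPrimes.isPrime {R : Type u} [CommRing R] [IsLocalRing R] (p : RegPrimes R) :
    p.1.IsPrime := p.2.1.1

/-- The residue field `κ(p) = Frac(R/p)` of a prime `p`. -/
def ResFieldP {R : Type u} [CommRing R] [IsLocalRing R] [IsDomain R] (p : RegPrimes R) :
    Type u := FractionRing (R ⧸ p.1)

noncomputable instance ResFieldP.instField {R : Type u} [CommRing R] [IsLocalRing R]
    [IsDomain R] (p : RegPrimes R) : Field (ResFieldP p) :=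
  inferInstanceAs (Field (FractionRing (R ⧸ p.1)))

/-- `ν` is the discrete valuation `ν_p` of `L = Frac R` attached to a height-one prime `p`:
it is nonnegative on `R` and positive exactly on `p`. -/
def IsNuPrime {R L : Type u} [CommRing R] [Field L] [Algebra R L] (p : Ideal R)
    (ν : L → ℤ) : Prop :=
  IsDVal ν ∧ (∀ x : R, x ≠ 0 → 0 ≤ ν (algebraMap R L x)) ∧
    ∀ x : R, x ≠ 0 → (x ∈ p ↔ 0 < ν (algebraMap R L x))

/-- `res` is the canonical residue map `L → κ(p)` of the valuation `ν_p`. -/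
def IsResPrime {R L : Type u} [CommRing R] [IsLocalRing R] [IsDomain R] [Field L]
    [Algebra R L] (p : RegPrimes R) (ν : L → ℤ) (res : L → ResFieldP p) : Prop :=
  IsResidue ν res ∧ ∀ x : R,
    res (algebraMap R L x) =
      algebraMap (R ⧸ p.1) (FractionRing (R ⧸ p.1)) (Ideal.Quotient.mk p.1 x)

/-- `ν̄` is the discrete valuation of `κ(p)` attached to the discrete valuation ring `R/p`:
nonnegative on `R/p` and positive exactly on the image of the maximal ideal of `R`. -/
def IsNuBar {R : Type u} [CommRing R] [IsLocalRing R] [IsDomain R] (p : RegPrimes R)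
    (ν : ResFieldP p → ℤ) : Prop :=
  IsDVal ν ∧
  (∀ x : R ⧸ p.1, x ≠ 0 →
    0 ≤ ν (algebraMap (R ⧸ p.1) (FractionRing (R ⧸ p.1)) x)) ∧
  ∀ x : R, Ideal.Quotient.mk p.1 x ≠ 0 →
    (x ∈ IsLocalRing.maximalIdeal R ↔
      0 < ν (algebraMap (R ⧸ p.1) (FractionRing (R ⧸ p.1)) (Ideal.Quotient.mk p.1 x)))

/-- `res` is the canonical residue map `κ(p) → k` of the valuation `ν̄_p`
(restricting to the identity on `k`). -/
def IsResBar {k R : Type u} [Field k] [CommRing R] [IsLocalRing R] [IsDomain R]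
    [Algebra k R] (p : RegPrimes R) (ν : ResFieldP p → ℤ) (res : ResFieldP p → k) : Prop :=
  IsResidue ν res ∧ ∀ c : k,
    res (algebraMap (R ⧸ p.1) (FractionRing (R ⧸ p.1))
      (Ideal.Quotient.mk p.1 (algebraMap k R c))) = c

/-- The Steinberg relations subspace of `Λ^n F^×` (with ℚ-coefficients). -/
def MilnorRel (F : Type u) [Field F] : (n : ℕ) → Submodule ℚ (⋀[ℚ]^n (UnitsQ F))
  | 0 => ⊥
  | 1 => ⊥
  | (m + 2) => Submodule.span ℚ
      {x | ∃ (a : F) (v : Fin m → F), a ≠ 0 ∧ a ≠ 1 ∧ (∀ i, v i ≠ 0) ∧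
        x = wedgeF (m + 2) (Fin.cons a (Fin.cons (1 - a) v))}

/-- The rational Milnor K-group `K_n^M(F) ⊗ ℚ`: the quotient of `Λ^n F^×` by the
Steinberg relations. -/
def MilnorQ (F : Type u) [Field F] (n : ℕ) : Type u :=
  (⋀[ℚ]^n (UnitsQ F)) ⧸ MilnorRel F n

noncomputable instance MilnorQ.instAddCommGroup (F : Type u) [Field F] (n : ℕ) :
    AddCommGroup (MilnorQ F n) :=
  inferInstanceAs (AddCommGroup ((⋀[ℚ]^n (UnitsQ F)) ⧸ MilnorRel F n))

noncomputable instance MilnorQ.instModule (F : Type u) [Field F] (n : ℕ) :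
    Module ℚ (MilnorQ F n) :=
  inferInstanceAs (Module ℚ ((⋀[ℚ]^n (UnitsQ F)) ⧸ MilnorRel F n))

/-- The class of an element of `Λ^n F^×` in `K_n^M(F) ⊗ ℚ`. -/
def MilnorQ.mk {F : Type u} [Field F] {n : ℕ} (x : ⋀[ℚ]^n (UnitsQ F)) : MilnorQ F n :=
  Submodule.Quotient.mk x

end ChowPrelim2

open scoped TensorProduct

universe u

/-!
A generator `{z}₂ ⊗ w₁ ∧ ⋯ ∧ wₙ` at `p` lifts to `-{g}₂ ⊗ (p ∧ g₁ ∧ ⋯ ∧ gₙ)`, where the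
polynomials `g, gᵢ` represent `z, wᵢ` and have degree `< deg p`. Its tame symbol at `p` is the
generator, while at every other `q` of degree `≥ deg p`, and at every `q` not dividing
`g p ∏ gᵢ`, all of `g, p, gᵢ` are `q`-adic units and the symbol vanishes. So the total tame
symbol is triangular with respect to `deg p`: subtracting lifts of the components of top degree
lowers the degrees in the support, and induction on the top degree gives surjectivity.
-/

section Triangular

variable {R M ι : Type*} {N : ι → Type*}

section Semiring

variable [Semiring R] [AddCommMonoid M] [Module R M] [∀ i, AddCommMonoid (N i)]
  [∀ i, Module R (N i)] (D : ∀ i, M →ₗ[R] N i)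

def cofiniteKer : Submodule R M where
  carrier := {b | {i | D i b ≠ 0}.Finite}
  zero_mem' := by simp
  add_mem' {b c} hb hc := (hb.union hc).subset fun i hi => by
    contrapose! hi
    simp_all
  smul_mem' r b hb := hb.subset fun i hi => by
    contrapose! hi
    simp_all

def lowerSupported (deg : ι → ℕ) (p : ι) : Submodule R M :=
  cofiniteKer D ⊓ ⨅ (q) (_ : q ≠ p ∧ deg p ≤ deg q), LinearMap.ker (D q)

theorem mem_lowerSupported {deg : ι → ℕ} {p : ι} {b : M} :
    b ∈ lowerSupported D deg p ↔
      b ∈ cofiniteKer D ∧ ∀ q, q ≠ p → deg p ≤ deg q → D q b = 0 := by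
  simp [lowerSupported, Submodule.mem_iInf]

variable {D} in
theorem exists_mem_cofiniteKer_apply_eq_of_le {deg : ι → ℕ}
    (hD : ∀ p, (lowerSupported D deg p).map (D p) = ⊤)
    {a : ∀ i, N i} (ha : {i | a i ≠ 0}.Finite) {d : ℕ} (hd : ∀ i, a i ≠ 0 → deg i ≤ d) :
    ∃ b ∈ cofiniteKer D, ∀ i, d ≤ deg i → D i b = a i := by
  classical
  have hlift p : ∃ b ∈ lowerSupported D deg p, D p b = a p := by
    simp [← Submodule.mem_map, hD p]
  choose b hb hba using hlift
  set S := ha.toFinset.filter (deg · = d)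
  refine ⟨∑ p ∈ S, b p, Submodule.sum_mem _ fun p _ => ((mem_lowerSupported D).1 (hb p)).1,
    fun i hi => ?_⟩
  have hoff : ∀ p ∈ S, p ≠ i → D i (b p) = 0 := fun p hp hpi =>
    ((mem_lowerSupported D).1 (hb p)).2 i hpi.symm (by simp_all [S])
  rw [map_sum]
  by_cases hiS : i ∈ S
  · rw [Finset.sum_eq_single_of_mem i hiS hoff, hba]
  · have hai : a i = 0 := by
      by_contra hai
      exact hiS (by simpa [S, hai] using (hd i hai).antisymm hi)
    rw [hai, Finset.sum_eq_zero fun p hp => hoff p hp (by rintro rfl; exact hiS hp)]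

end Semiring

variable [Ring R] [AddCommMonoid M] [Module R M] [∀ i, AddCommMonoid (N i)] [∀ i, Module R (N i)]
  {D : ∀ i, M →ₗ[R] N i} {deg : ι → ℕ}

theorem exists_forall_apply_eq_of_map_lowerSupported_eq_top
    (hD : ∀ p, (lowerSupported D deg p).map (D p) = ⊤) {a : ∀ i, N i}
    (ha : {i | a i ≠ 0}.Finite) : ∃ b, ∀ i, D i b = a i := by
  suffices key : ∀ d : ℕ, ∀ a : ∀ i, N i, {i | a i ≠ 0}.Finite → (∀ i, a i ≠ 0 → deg i < d) →
      ∃ b, ∀ i, D i b = a i by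
    classical
    exact key (ha.toFinset.sup deg + 1) a ha fun i hi =>
      Nat.lt_succ_of_le (Finset.le_sup (ha.mem_toFinset.2 hi))
  intro d
  induction d with
  | zero =>
    refine fun a _ ha0 => ⟨0, fun i => ?_⟩
    rw [map_zero, eq_comm]
    by_contra h
    exact Nat.not_lt_zero _ (ha0 i h)
  | succ d ih =>
    intro a ha had
    obtain ⟨b, hb, hba⟩ := exists_mem_cofiniteKer_apply_eq_of_le hD ha
      fun i hi => Nat.lt_succ_iff.1 (had i hi)
    -- `(-1 : R) • b` stands in for `-b`: the modules are only given as additive monoids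
    have hneg i : D i b + D i ((-1 : R) • b) = 0 := by
      rw [← map_add]
      simpa using congrArg (D i) (add_smul (1 : R) (-1) b).symm
    obtain ⟨c, hc⟩ := ih (fun i => a i + D i ((-1 : R) • b))
      ((ha.union hb).subset fun i hi => by
        by_contra hi'
        simp only [Set.mem_union, Set.mem_ofPred_eq, not_or, not_not] at hi'
        simp [hi'.1, hi'.2] at hi)
      fun i hi => by
        by_contra! hdi
        exact hi (by rw [← hba i hdi, hneg])
    exact ⟨b + c, fun i => by rw [map_add, hc, add_left_comm, hneg, add_zero]⟩

end Triangular

section UnitsQ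

variable {K : Type*} [Field K]

theorem mkQ_mul {x y : K} (hx : x ≠ 0) (hy : y ≠ 0) : mkQ (x * y) = mkQ x + mkQ y := by
  simp only [mkQ, dif_neg hx, dif_neg hy, dif_neg (mul_ne_zero hx hy)]
  rw [← TensorProduct.tmul_add, ← ofMul_mul, ← Units.mk0_mul]

theorem mkQ_coe_units (u : Kˣ) : mkQ (u : K) = (1 : ℚ) ⊗ₜ[ℤ] Additive.ofMul u := by
  simp [mkQ]

theorem span_range_mkQ_units : Submodule.span ℚ (Set.range fun u : Kˣ => mkQ (u : K)) = ⊤ := by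
  rw [eq_top_iff]
  rintro v -
  induction v using TensorProduct.induction_on with
  | zero => exact zero_mem _
  | add x y hx hy => exact add_mem hx hy
  | tmul q m =>
    rw [← mul_one q, ← smul_eq_mul, ← TensorProduct.smul_tmul']
    exact Submodule.smul_mem _ _ (Submodule.subset_span ⟨Additive.toMul m, mkQ_coe_units _⟩)

theorem wedgeF_eq_ιMulti (n : ℕ) (x : Fin n → K) :
    wedgeF n x = exteriorPower.ιMulti ℚ n (mkQ ∘ x) := rfl

theorem span_range_wedgeF_units (n : ℕ) :
    Submodule.span ℚ (Set.range fun w : Fin n → Kˣ => wedgeF n fun i => (w i : K)) = ⊤ := by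
  rw [eq_top_iff, ← exteriorPower.ιMulti_span_of_span ℚ n (UnitsQ K) span_range_mkQ_units,
    Submodule.span_le]
  rintro _ ⟨v, hv, rfl⟩
  choose w hw using fun i => hv ⟨i, rfl⟩
  refine Submodule.subset_span ⟨w, ?_⟩
  simp only [wedgeF_eq_ιMulti]
  exact congrArg _ (funext hw)

theorem wedgeF_cons_mul {n : ℕ} {x y : K} (hx : x ≠ 0) (hy : y ≠ 0) (v : Fin n → K) :
    wedgeF (n + 1) (Fin.cons (x * y) v) =
      wedgeF (n + 1) (Fin.cons x v) + wedgeF (n + 1) (Fin.cons y v) := by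
  simp only [wedgeF_eq_ιMulti, Fin.comp_cons, mkQ_mul hx hy]
  simpa only [Fin.update_cons_zero] using
    (exteriorPower.ιMulti ℚ (n + 1)).map_update_add (Fin.cons (mkQ x) (mkQ ∘ v)) 0 (mkQ x) (mkQ y)

end UnitsQ

section PreBloch

variable {K : Type*} [Field K]

theorem B2.gen_zero : B2.gen (0 : K) = 0 := by
  rw [B2.gen, Submodule.Quotient.mk_eq_zero]
  exact Submodule.subset_span (Or.inl (by simp))

theorem B2.span_range_gen : Submodule.span ℚ (Set.range (B2.gen : K → B2 K)) = ⊤ := by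
  rw [eq_top_iff, ← LinearMap.range_eq_top.2 (B2Rel K).mkQ_surjective, LinearMap.range_eq_map,
    ← Finsupp.basisSingleOne.span_eq, Submodule.map_span, Submodule.span_le]
  rintro _ ⟨_, ⟨o, rfl⟩, rfl⟩
  cases o with
  | none =>
    have h : (B2Rel K).mkQ (Finsupp.single none 1) = 0 := by
      rw [Submodule.mkQ_apply, Submodule.Quotient.mk_eq_zero]
      exact Submodule.subset_span (Or.inl (by simp))
    rw [Finsupp.coe_basisSingleOne, h]
    exact zero_mem _
  | some x => exact Submodule.subset_span ⟨x, rfl⟩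

theorem span_gen_tmul_wedgeF_units (n : ℕ) :
    Submodule.span ℚ (Set.image2 (· ⊗ₜ[ℚ] ·) (Set.range (B2.gen : K → B2 K))
      (Set.range fun w : Fin n → Kˣ => wedgeF n fun i => (w i : K))) = ⊤ := by
  have h := Submodule.map₂_span_span ℚ (TensorProduct.mk ℚ (B2 K) (⋀[ℚ]^n (UnitsQ K)))
    (Set.range B2.gen) (Set.range fun w : Fin n → Kˣ => wedgeF n fun i => (w i : K))
  rw [B2.span_range_gen, span_range_wedgeF_units, TensorProduct.map₂_mk_top_top_eq_top] at h
  exact h.symm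

end PreBloch

section Valuations

variable {F K : Type u} [Field F] [Field K] {ν : F → ℤ} {res : F → K} {n : ℕ}

/-- Comparing the uniformizers `π` and `π * u 0` shows that the symbol kills `u`. -/
theorem IsTame.apply_eq_zero_of_units {Dn : ⋀[ℚ]^(n + 1) (UnitsQ F) →ₗ[ℚ] ⋀[ℚ]^n (UnitsQ K)}
    (hν : IsDVal ν) (hDn : IsTame ν res n Dn) {u : Fin (n + 1) → F}
    (hu : ∀ i, u i ≠ 0 ∧ ν (u i) = 0) : Dn (wedgeF (n + 1) u) = 0 := by
  obtain ⟨π, hπ0, hπ⟩ := hν.surj 1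
  obtain ⟨hu0, hνu0⟩ := hu 0
  have htail (i : Fin n) : Fin.tail u i ≠ 0 ∧ ν (Fin.tail u i) = 0 := hu i.succ
  have hπu : ν (π * u 0) = 1 := by rw [hν.map_mul _ _ hπ0 hu0, hπ, hνu0, add_zero]
  have hsplit := congrArg Dn (wedgeF_cons_mul hπ0 hu0 (Fin.tail u))
  rw [map_add, Fin.cons_self_tail, hDn π _ hπ0 hπ htail,
    hDn (π * u 0) _ (mul_ne_zero hπ0 hu0) hπu htail] at hsplit
  exact add_eq_left.1 hsplit.symm

theorem IsTameBGen.apply_eq_zero_of_units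
    {Dn : ⋀[ℚ]^(n + 1) (UnitsQ F) →ₗ[ℚ] ⋀[ℚ]^n (UnitsQ K)}
    {D : B2 F ⊗[ℚ] (⋀[ℚ]^(n + 1) (UnitsQ F)) →ₗ[ℚ] B2 K ⊗[ℚ] (⋀[ℚ]^n (UnitsQ K))}
    (hD : IsTameBGen ν res n Dn D) (hν : IsDVal ν) (hDn : IsTame ν res n Dn) {u : F}
    (hu : u ≠ 0 ∧ ν u = 0) {v : Fin (n + 1) → F} (hv : ∀ i, v i ≠ 0 ∧ ν (v i) = 0) :
    D (B2.gen u ⊗ₜ wedgeF (n + 1) v) = 0 := by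
  rw [hD.2 u _ hu.1 hu.2, hDn.apply_eq_zero_of_units hν hv, TensorProduct.tmul_zero, neg_zero]

end Valuations

namespace MonicIrr

open Polynomial

variable {F : Type*} [Field F]

theorem eq_of_dvd {p q : MonicIrr F} (h : p.1 ∣ q.1) : p = q :=
  Subtype.ext (eq_of_monic_of_associated p.2.1 q.2.1 (p.2.2.associated_of_dvd q.2.2 h))

theorem not_dvd_of_natDegree_lt (q : MonicIrr F) {g : F[X]} (hg : g ≠ 0)
    (h : g.natDegree < q.1.natDegree) : ¬q.1 ∣ g :=
  fun hdvd => (natDegree_le_of_dvd hdvd hg).not_gt h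

theorem finite_setOf_dvd {f : F[X]} (hf : f ≠ 0) : {q : MonicIrr F | q.1 ∣ f}.Finite := by
  classical
  refine ((UniqueFactorizationMonoid.normalizedFactors f).toFinset.finite_toSet.preimage
    Subtype.val_injective.injOn).subset fun q hq => ?_
  simp only [Set.mem_preimage, Finset.mem_coe, Multiset.mem_toFinset]
  exact (Polynomial.mem_normalizedFactors_iff hf).2 ⟨q.2.2, q.2.1, hq⟩

theorem exists_lift (p : MonicIrr F) {y : ResField p} (hy : y ≠ 0) :
    ∃ g : F[X], g ≠ 0 ∧ g.natDegree < p.1.natDegree ∧ AdjoinRoot.mk p.1 g = y := by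
  obtain ⟨g, rfl⟩ := AdjoinRoot.mk_surjective (g := p.1) y
  have hmod : AdjoinRoot.mk p.1 (g %ₘ p.1) = AdjoinRoot.mk p.1 g :=
    AdjoinRoot.mk_leftInverse p.2.1 (AdjoinRoot.mk p.1 g)
  have hne : g %ₘ p.1 ≠ 0 := fun h0 => hy (by rw [← hmod, h0, map_zero]; rfl)
  exact ⟨g %ₘ p.1, hne, natDegree_lt_natDegree hne (degree_modByMonic_lt g p.2.1), hmod⟩

end MonicIrr

section RatFunc

open Polynomial

variable {F : Type u} [Field F]

theorem IsNuP.unit_of_not_dvd {p : MonicIrr F} {ν : RatFunc F → ℤ} (hν : IsNuP p ν) {g : F[X]}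
    (hg : g ≠ 0) (hpg : ¬p.1 ∣ g) :
    algebraMap F[X] (RatFunc F) g ≠ 0 ∧ ν (algebraMap F[X] (RatFunc F) g) = 0 :=
  ⟨RatFunc.algebraMap_ne_zero hg, hν.2.2 g hg hpg⟩

variable {n : ℕ} {ν : MonicIrr F → RatFunc F → ℤ}
  {res : ∀ p : MonicIrr F, RatFunc F → ResField p}
  {D2 : ∀ p : MonicIrr F,
    ⋀[ℚ]^(n + 1) (UnitsQ (RatFunc F)) →ₗ[ℚ] ⋀[ℚ]^n (UnitsQ (ResField p))}
  {D : ∀ p : MonicIrr F,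
    B2 (RatFunc F) ⊗[ℚ] (⋀[ℚ]^(n + 1) (UnitsQ (RatFunc F))) →ₗ[ℚ]
      B2 (ResField p) ⊗[ℚ] (⋀[ℚ]^n (UnitsQ (ResField p)))}

theorem map_lowerSupported_tameSymbol_eq_top (hν : ∀ p, IsNuP p (ν p))
    (hres : ∀ p, IsResP p (ν p) (res p)) (hD2 : ∀ p, IsTame (ν p) (res p) n (D2 p))
    (hD : ∀ p, IsTameBGen (ν p) (res p) n (D2 p) (D p)) (p : MonicIrr F) :
    (lowerSupported D (fun q => q.1.natDegree) p).map (D p) = ⊤ := by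
  rw [eq_top_iff, ← span_gen_tmul_wedgeF_units, Submodule.span_le]
  rintro _ ⟨_, ⟨z, rfl⟩, _, ⟨w, rfl⟩, rfl⟩
  dsimp only
  obtain rfl | hz := eq_or_ne z 0
  · rw [B2.gen_zero, TensorProduct.zero_tmul]
    exact zero_mem _
  obtain ⟨g, hg, hgp, rfl⟩ := p.exists_lift hz
  choose h hh hhp hhw using fun i => p.exists_lift (w i).ne_zero
  set b := B2.gen (algebraMap F[X] (RatFunc F) g) ⊗ₜ[ℚ]
    wedgeF (n + 1) (algebraMap F[X] (RatFunc F) ∘ Fin.cons p.1 h)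
  have hvanish (q : MonicIrr F) (hqg : ¬q.1 ∣ g) (hqp : ¬q.1 ∣ p.1) (hqh : ∀ i, ¬q.1 ∣ h i) :
      D q b = 0 := by
    refine (hD q).apply_eq_zero_of_units (hν q).1 (hD2 q) ((hν q).unit_of_not_dvd hg hqg) ?_
    refine Fin.cases ?_ fun i => ?_
    · exact (hν q).unit_of_not_dvd p.2.2.ne_zero hqp
    · exact (hν q).unit_of_not_dvd (hh i) (hqh i)
  refine ⟨-b, (mem_lowerSupported D).2 ⟨?_, fun q hqp hpq => ?_⟩, ?_⟩
  · have hprod : g * p.1 * ∏ i, h i ≠ 0 :=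
      mul_ne_zero (mul_ne_zero hg p.2.2.ne_zero) (Finset.prod_ne_zero_iff.2 fun i _ => hh i)
    refine (MonicIrr.finite_setOf_dvd hprod).subset fun q hq => ?_
    by_contra hdvd
    refine hq ?_
    rw [map_neg, hvanish q (fun hqg => hdvd ((hqg.mul_right _).mul_right _))
      (fun hqp => hdvd ((hqp.mul_left _).mul_right _))
      (fun i hqh => hdvd ((hqh.trans (Finset.dvd_prod_of_mem _ (Finset.mem_univ i))).mul_left _)),
      neg_zero]
  · rw [map_neg, hvanish q (q.not_dvd_of_natDegree_lt hg (hgp.trans_le hpq))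
      (fun hdvd => hqp (MonicIrr.eq_of_dvd hdvd))
      (fun i => q.not_dvd_of_natDegree_lt (hh i) ((hhp i).trans_le hpq)), neg_zero]
  · have hpu := (hν p).unit_of_not_dvd hg (p.not_dvd_of_natDegree_lt hg hgp)
    have hph i := (hν p).unit_of_not_dvd (hh i) (p.not_dvd_of_natDegree_lt (hh i) (hhp i))
    rw [map_neg, (hD p).2 _ _ hpu.1 hpu.2, Fin.comp_cons,
      hD2 p _ (algebraMap F[X] (RatFunc F) ∘ h) (RatFunc.algebraMap_ne_zero p.2.2.ne_zero)
        (hν p).2.1 hph, neg_neg]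
    simp only [Function.comp_apply, (hres p).2, hhw]

end RatFunc

theorem statement_6_general (F : Type u) [Field F] (n : ℕ)
    (ν : ∀ p : MonicIrr F, RatFunc F → ℤ) (hν : ∀ p, IsNuP p (ν p))
    (res : ∀ p : MonicIrr F, RatFunc F → ResField p) (hres : ∀ p, IsResP p (ν p) (res p))
    (D2 : ∀ p : MonicIrr F,
      ⋀[ℚ]^(n + 1) (UnitsQ (RatFunc F)) →ₗ[ℚ] ⋀[ℚ]^n (UnitsQ (ResField p)))
    (hD2 : ∀ p, IsTame (ν p) (res p) n (D2 p))
    (D : ∀ p : MonicIrr F,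
      B2 (RatFunc F) ⊗[ℚ] (⋀[ℚ]^(n + 1) (UnitsQ (RatFunc F))) →ₗ[ℚ]
        B2 (ResField p) ⊗[ℚ] (⋀[ℚ]^n (UnitsQ (ResField p))))
    (hD : ∀ p, IsTameBGen (ν p) (res p) n (D2 p) (D p))
    (a : ∀ p : MonicIrr F, B2 (ResField p) ⊗[ℚ] (⋀[ℚ]^n (UnitsQ (ResField p))))
    (ha : {p | a p ≠ 0}.Finite) :
    ∃ b : B2 (RatFunc F) ⊗[ℚ] (⋀[ℚ]^(n + 1) (UnitsQ (RatFunc F))), ∀ p, D p b = a p :=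
  exists_forall_apply_eq_of_map_lowerSupported_eq_top
    (map_lowerSupported_tameSymbol_eq_top hν hres hD2 hD) ha

/-- surjectivity of the total tame-symbol map
`B₂(F(t)) ⊗ Λ^{m-2} F(t)^× → ⊕_p B₂(F(p)) ⊗ Λ^{m-3} F(p)^×`, `m = n + 3 ≥ 3`. -/
theorem statement_6 (k F : Type u) [Field k] [IsAlgClosed k] [CharZero k] [Field F]
    [Algebra k F] (hF : IsFields1 k F) (n : ℕ)
    (ν : ∀ p : MonicIrr F, RatFunc F → ℤ) (hν : ∀ p, IsNuP p (ν p))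
    (res : ∀ p : MonicIrr F, RatFunc F → ResField p) (hres : ∀ p, IsResP p (ν p) (res p))
    (D2 : ∀ p : MonicIrr F,
      ⋀[ℚ]^(n + 1) (UnitsQ (RatFunc F)) →ₗ[ℚ] ⋀[ℚ]^n (UnitsQ (ResField p)))
    (hD2 : ∀ p, IsTame (ν p) (res p) n (D2 p))
    (D : ∀ p : MonicIrr F,
      B2 (RatFunc F) ⊗[ℚ] (⋀[ℚ]^(n + 1) (UnitsQ (RatFunc F))) →ₗ[ℚ]
        B2 (ResField p) ⊗[ℚ] (⋀[ℚ]^n (UnitsQ (ResField p))))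
    (hD : ∀ p, IsTameBGen (ν p) (res p) n (D2 p) (D p))
    (a : ∀ p : MonicIrr F, B2 (ResField p) ⊗[ℚ] (⋀[ℚ]^n (UnitsQ (ResField p))))
    (ha : {p | a p ≠ 0}.Finite) :
    ∃ b : B2 (RatFunc F) ⊗[ℚ] (⋀[ℚ]^(n + 1) (UnitsQ (RatFunc F))), ∀ p, D p b = a p :=
  statement_6_general F n ν hν res hres D2 hD2 D hD a ha
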